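/- If a nonempty closed subset A of a Euclidean space E is prox-regular at x̄ ∈ A, then there exist constants ε̄ > 0 and δ̄ > 0 such that for every ε > 0, setting δ := ε δ̄ / ε̄, the inequality ⟨v, x − a⟩ ≤ ε ‖v‖ ‖x − a‖ holds for all x, a ∈ A ∩ B_δ(x̄) and all v ∈ N_A(a); that is, A is elementally regular at x̄ for all pairs (a,v) with a ∈ A ∩ B_δ(x̄) and v ∈ N_A(a), with constant ε and neighborhood B_δ(x̄). Consequently, prox-regularity of A at x̄ implies super-regularity of A at x̄. -/

import Mathlib

open Metric Set Pointwise Filter ENNReal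
open scoped RealInnerProductSpace

section Defs

variable {E : Type*} [NormedAddCommGroup E] [InnerProductSpace ℝ E] [FiniteDimensional ℝ E]

/-- The projector onto a set: `P_A(x) = {a ∈ A : ‖x − a‖ = d(x,A)}`. -/
def projSet (A : Set E) (x : E) : Set E := {a | a ∈ A ∧ ‖x - a‖ = Metric.infDist x A}

/-- The proximal normal cone `N^p_A(a) = {λ(x−a) : λ ≥ 0, a ∈ P_A(x)}`. -/
def proxNC (A : Set E) (a : E) : Set E :=
  {v | ∃ lam : ℝ, 0 ≤ lam ∧ ∃ x : E, a ∈ projSet A x ∧ v = lam • (x - a)}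

/-- The restricted (`A'`-)proximal normal cone
`N^p_{A|A'}(a) = {λ(x−a) : λ ≥ 0, x ∈ A', a ∈ P_A(x)}`. -/
def proxNCRes (A A' : Set E) (a : E) : Set E :=
  {v | ∃ lam : ℝ, 0 ≤ lam ∧ ∃ x ∈ A', a ∈ projSet A x ∧ v = lam • (x - a)}

/-- The limiting normal cone: limits of proximal normals at points of `A` converging to `a`. -/
def limNC (A : Set E) (a : E) : Set E :=
  {v | ∃ x w : ℕ → E, (∀ k, x k ∈ A) ∧ (∀ k, w k ∈ proxNC A (x k)) ∧
    Filter.Tendsto x Filter.atTop (nhds a) ∧ Filter.Tendsto w Filter.atTop (nhds v)}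

/-- The Fréchet normal cone (via the standard ε-δ reformulation of `limsup ≤ 0`). -/
def frechetNC (A : Set E) (a : E) : Set E :=
  {v | ∀ ε > 0, ∃ δ > 0, ∀ x ∈ A, ‖x - a‖ < δ → ⟪v, x - a⟫ ≤ ε * ‖x - a‖}

/-- `A` is elementally subregular of order `σ` relative to `B` for `(a,v)` with constant `ε`
and neighborhood `U` (of the reference point). -/
def ElemSubregOn (A B : Set E) (a v : E) (ε σ : ℝ) (U : Set E) : Prop :=
  ∀ b ∈ B ∩ U, ∀ bA ∈ projSet A b,
    ⟪v - (b - bA), bA - a⟫ ≤ ε * ‖v - (b - bA)‖ ^ (1 + σ) * ‖bA - a‖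

/-- `A` is `σ`-Hölder regular relative to `B` (first argument is the projected set) at points of
`B ∩ W` with constant `c` and neighborhood `W`:
`B_{(1+c)‖b−b_A‖}(b) ∩ A ∩ {x ∈ P_B⁻¹(b) : ⟨b−b_A, x−b_A⟩ > √c ‖b−b_A‖^{σ+1} ‖x−b_A‖} = ∅`. -/
def HoelderRegOn (A B : Set E) (σ c : ℝ) (W : Set E) : Prop :=
  ∀ b ∈ B ∩ W, ∀ bA ∈ projSet A b ∩ W,
    ∀ x ∈ Metric.ball b ((1 + c) * ‖b - bA‖) ∩ A, b ∈ projSet B x →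
      ⟪b - bA, x - bA⟫ ≤ Real.sqrt c * ‖b - bA‖ ^ (σ + 1) * ‖x - bA‖

/-- `A` is super-regular at `x̄`. -/
def SuperRegular (A : Set E) (xb : E) : Prop :=
  ∀ ε > 0, ∃ δ > 0, ∀ x ∈ A ∩ Metric.ball xb δ, ∀ z ∈ Metric.ball xb δ, ∀ zA ∈ projSet A z,
    ⟪z - zA, x - zA⟫ ≤ ε * ‖z - zA‖ * ‖x - zA‖

/-- Subtransversality with constants `α`, `δ`:
`(A + (αρ)𝔹) ∩ (B + (αρ)𝔹) ∩ B_δ(x̄) ⊆ (A ∩ B) + ρ𝔹` for all `ρ ∈ (0,δ)`. -/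
def SubtransversalWith (A B : Set E) (xb : E) (α δ : ℝ) : Prop :=
  ∀ ρ ∈ Set.Ioo (0 : ℝ) δ,
    (A + Metric.ball 0 (α * ρ)) ∩ (B + Metric.ball 0 (α * ρ)) ∩ Metric.ball xb δ ⊆
      (A ∩ B) + Metric.ball 0 ρ

/-- The collection `{A,B}` is subtransversal at `x̄`. -/
def Subtransversal (A B : Set E) (xb : E) : Prop :=
  ∃ α > 0, ∃ δ > 0, SubtransversalWith A B xb α δ

/-- `sr[A,B](x̄)`: the (possibly infinite) supremum of admissible subtransversality constants. -/
noncomputable def srColl (A B : Set E) (xb : E) : ℝ≥0∞ :=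
  ⨆ α ∈ {α : ℝ | 0 < α ∧ ∃ δ > 0, SubtransversalWith A B xb α δ}, ENNReal.ofReal α

/-- Transversality with constants `α`, `δ`:
`(A − a − x₁) ∩ (B − b − x₂) ∩ (ρ𝔹) ≠ ∅` for all `ρ ∈ (0,δ)`, `a ∈ A ∩ B_δ(x̄)`,
`b ∈ B ∩ B_δ(x̄)` and `max{‖x₁‖,‖x₂‖} < αρ`. -/
def TransversalWith (A B : Set E) (xb : E) (α δ : ℝ) : Prop :=
  ∀ ρ ∈ Set.Ioo (0 : ℝ) δ, ∀ a ∈ A ∩ Metric.ball xb δ, ∀ b ∈ B ∩ Metric.ball xb δ,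
    ∀ x₁ x₂ : E, max ‖x₁‖ ‖x₂‖ < α * ρ →
      (((fun z => z - a - x₁) '' A) ∩ ((fun z => z - b - x₂) '' B) ∩
        Metric.ball 0 ρ).Nonempty

/-- The collection `{A,B}` is transversal at `x̄`. -/
def Transversal (A B : Set E) (xb : E) : Prop :=
  ∃ α > 0, ∃ δ > 0, TransversalWith A B xb α δ

/-- `rg[A,B](x̄)`: the (possibly infinite) supremum of admissible transversality constants. -/
noncomputable def rgColl (A B : Set E) (xb : E) : ℝ≥0∞ :=
  ⨆ α ∈ {α : ℝ | 0 < α ∧ ∃ δ > 0, TransversalWith A B xb α δ}, ENNReal.ofReal α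

end Defs

section Maps

variable {X Y : Type*} [PseudoMetricSpace X] [PseudoMetricSpace Y]

/-- Metric subregularity of the set-valued mapping `F` at `x̄` for `ȳ` with constant `α`
(distances to possibly empty sets are taken in `ℝ≥0∞`, so that `d(x,∅) = ∞`). -/
def MetrSubregWith (F : X → Set Y) (xb : X) (yb : Y) (α : ℝ) : Prop :=
  ∃ δ > 0, ∀ x ∈ Metric.ball xb δ,
    ENNReal.ofReal α * EMetric.infEdist x {x' | yb ∈ F x'} ≤ EMetric.infEdist yb (F x)

/-- `sr[F](x̄|ȳ)`: the supremum of admissible metric subregularity constants. -/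
noncomputable def srMap (F : X → Set Y) (xb : X) (yb : Y) : ℝ≥0∞ :=
  ⨆ α ∈ {α : ℝ | 0 < α ∧ MetrSubregWith F xb yb α}, ENNReal.ofReal α

/-- Metric regularity of the set-valued mapping `F` at `x̄` for `ȳ` with constant `α`. -/
def MetrRegWith (F : X → Set Y) (xb : X) (yb : Y) (α : ℝ) : Prop :=
  ∃ δ > 0, ∀ x ∈ Metric.ball xb δ, ∀ y ∈ Metric.ball yb δ,
    ENNReal.ofReal α * EMetric.infEdist x {x' | y ∈ F x'} ≤ EMetric.infEdist y (F x)

/-- `r[F](x̄|ȳ)`: the supremum of admissible metric regularity constants. -/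
noncomputable def rMap (F : X → Set Y) (xb : X) (yb : Y) : ℝ≥0∞ :=
  ⨆ α ∈ {α : ℝ | 0 < α ∧ MetrRegWith F xb yb α}, ENNReal.ofReal α

/-- `x` is an isolated point of `S`. -/
def IsIsolatedIn (x : X) (S : Set X) : Prop :=
  x ∈ S ∧ ∃ ε > 0, ∀ y ∈ S ∩ Metric.ball x ε, y = x

end Maps

section Statements

variable {E : Type*} [NormedAddCommGroup E] [InnerProductSpace ℝ E] [FiniteDimensional ℝ E]

lemma mem_projSet_self' {A : Set E} {a : E} (ha : a ∈ A) : a ∈ projSet A a := by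
  refine ⟨ha, ?_⟩
  rw [sub_self, norm_zero, Metric.infDist_zero_of_mem ha]

lemma proxNC_subset_limNC' {A : Set E} {a : E} (ha : a ∈ A) : proxNC A a ⊆ limNC A a := by
  intro v hv
  exact ⟨fun _ => a, fun _ => v, fun _ => ha, fun _ => hv, tendsto_const_nhds,
    tendsto_const_nhds⟩

lemma zero_mem_limNC' {A : Set E} {a : E} (ha : a ∈ A) : (0 : E) ∈ limNC A a :=
  proxNC_subset_limNC' ha ⟨0, le_refl 0, a, mem_projSet_self' ha, by simp⟩

lemma limNC_smul' {A : Set E} {a v : E} {t : ℝ} (ht : 0 ≤ t) (hv : v ∈ limNC A a) :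
    t • v ∈ limNC A a := by
  obtain ⟨x, w, hx, hw, hxt, hwt⟩ := hv
  refine ⟨x, fun k => t • w k, hx, fun k => ?_, hxt, hwt.const_smul t⟩
  obtain ⟨lam, hlam, y, hy, hwk⟩ := hw k
  exact ⟨t * lam, mul_nonneg ht hlam, y, hy, by show t • w k = _; rw [hwk, smul_smul]⟩

theorem stmt5 (A : Set E) (hA : IsClosed A) (hAne : A.Nonempty) (xb : E) (hxb : xb ∈ A)
    (hprox : ∀ vb ∈ limNC A xb, ∃ ε > 0, ∃ δ > 0,
      ∀ x ∈ A ∩ Metric.ball xb δ, ∀ a ∈ A ∩ Metric.ball xb δ,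
        ∀ v ∈ limNC A a ∩ Metric.ball vb δ, ⟪v, x - a⟫ ≤ ε / 2 * ‖x - a‖ ^ 2) :
    (∃ εbar > (0 : ℝ), ∃ δbar > (0 : ℝ), ∀ ε > (0 : ℝ),
      ∀ x ∈ A ∩ Metric.ball xb (ε * δbar / εbar), ∀ a ∈ A ∩ Metric.ball xb (ε * δbar / εbar),
        ∀ v ∈ limNC A a, ⟪v, x - a⟫ ≤ ε * ‖v‖ * ‖x - a‖) ∧
    SuperRegular A xb := by
  obtain ⟨eb, heb, db, hdb, H⟩ := hprox 0 (zero_mem_limNC' hxb)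
  set ebar : ℝ := max (2 * eb) 2 with hebar
  have hebar2 : (2 : ℝ) ≤ ebar := le_max_right _ _
  have hebarpos : (0 : ℝ) < ebar := by linarith
  have key : ∀ ε > (0 : ℝ),
      ∀ x ∈ A ∩ Metric.ball xb (ε * db / ebar), ∀ a ∈ A ∩ Metric.ball xb (ε * db / ebar),
        ∀ v ∈ limNC A a, ⟪v, x - a⟫ ≤ ε * ‖v‖ * ‖x - a‖ := by
    intro ε hε x hx a ha v hv
    rcases le_or_gt 1 ε with hε1 | hε1
    · calc ⟪v, x - a⟫ ≤ ‖v‖ * ‖x - a‖ := real_inner_le_norm v (x - a)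
        _ = 1 * ‖v‖ * ‖x - a‖ := by ring
        _ ≤ ε * ‖v‖ * ‖x - a‖ := by
            have := mul_nonneg (norm_nonneg v) (norm_nonneg (x - a))
            nlinarith
    · -- small ε case: balls are inside ball xb db
      have hrad : ε * db / ebar < db := by
        rw [div_lt_iff₀ hebarpos]
        nlinarith
      have hxdb : x ∈ A ∩ Metric.ball xb db :=
        ⟨hx.1, Metric.ball_subset_ball hrad.le hx.2⟩
      have hadb : a ∈ A ∩ Metric.ball xb db :=
        ⟨ha.1, Metric.ball_subset_ball hrad.le ha.2⟩
      rcases eq_or_ne v 0 with rfl | hv0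
      · simp
      have hvn : (0 : ℝ) < ‖v‖ := norm_pos_iff.mpr hv0
      set t : ℝ := db / (2 * ‖v‖) with ht
      have htpos : 0 < t := div_pos hdb (by positivity)
      have hw : t • v ∈ limNC A a := limNC_smul' htpos.le hv
      have hwnorm : ‖t • v‖ = db / 2 := by
        rw [norm_smul, Real.norm_eq_abs, abs_of_pos htpos, ht]
        field_simp
      have hwball : t • v ∈ Metric.ball (0 : E) db := by
        rw [Metric.mem_ball, dist_zero_right, hwnorm]
        linarith
      have hH := H x hxdb a hadb (t • v) ⟨hw, hwball⟩
      rw [real_inner_smul_left] at hH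
      -- ⟨v, x-a⟩ ≤ (eb * ‖v‖ / db) * ‖x-a‖^2
      have h1 : ⟪v, x - a⟫ ≤ eb * ‖v‖ / db * ‖x - a‖ ^ 2 := by
        have h2 : ⟪v, x - a⟫ = (1 / t) * (t * ⟪v, x - a⟫) := by
          field_simp
        rw [h2]
        have h3 : (1 / t) * (t * ⟪v, x - a⟫) ≤ (1 / t) * (eb / 2 * ‖x - a‖ ^ 2) := by
          apply mul_le_mul_of_nonneg_left hH (by positivity)
        refine h3.trans (le_of_eq ?_)
        rw [ht]
        field_simp
      -- and ‖x - a‖ ≤ ε * db / eb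
      have hxa : ‖x - a‖ ≤ ε * db / eb := by
        have hx2 : ‖x - xb‖ < ε * db / ebar := by
          rw [← dist_eq_norm]; exact hx.2
        have ha2 : ‖xb - a‖ < ε * db / ebar := by
          rw [← dist_eq_norm, dist_comm]; exact ha.2
        have h5 : ‖x - a‖ < 2 * (ε * db / ebar) := by
          calc ‖x - a‖ = ‖(x - xb) + (xb - a)‖ := by rw [sub_add_sub_cancel]
            _ ≤ ‖x - xb‖ + ‖xb - a‖ := norm_add_le _ _
            _ < 2 * (ε * db / ebar) := by linarith
        have h6 : 2 * (ε * db / ebar) ≤ ε * db / eb := by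
          rw [← mul_div_assoc, div_le_div_iff₀ hebarpos heb]
          have : 2 * eb ≤ ebar := le_max_left _ _
          nlinarith [mul_pos hε hdb]
        linarith
      calc ⟪v, x - a⟫ ≤ eb * ‖v‖ / db * ‖x - a‖ ^ 2 := h1
        _ = (eb / db * ‖x - a‖) * (‖v‖ * ‖x - a‖) := by ring
        _ ≤ ε * (‖v‖ * ‖x - a‖) := by
            apply mul_le_mul_of_nonneg_right _ (by positivity)
            rw [div_mul_eq_mul_div, div_le_iff₀ hdb]
            calc eb * ‖x - a‖ ≤ eb * (ε * db / eb) :=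
                mul_le_mul_of_nonneg_left hxa heb.le
              _ = ε * db := by field_simp
        _ = ε * ‖v‖ * ‖x - a‖ := by ring
  refine ⟨⟨ebar, hebarpos, db, hdb, key⟩, ?_⟩
  intro ε hε
  refine ⟨ε * db / ebar / 2, by positivity, ?_⟩
  intro x hx z hz zA hzA
  have hzAA : zA ∈ A := hzA.1
  have hv : z - zA ∈ limNC A zA :=
    proxNC_subset_limNC' hzAA ⟨1, zero_le_one, z, hzA, by rw [one_smul]⟩
  have hzAball : zA ∈ Metric.ball xb (ε * db / ebar) := by
    rw [Metric.mem_ball] at hz ⊢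
    have h1 : dist z zA ≤ dist z xb := by
      rw [dist_eq_norm, hzA.2]
      exact Metric.infDist_le_dist_of_mem hxb
    calc dist zA xb ≤ dist zA z + dist z xb := dist_triangle _ _ _
      _ = dist z zA + dist z xb := by rw [dist_comm]
      _ ≤ dist z xb + dist z xb := by linarith
      _ < ε * db / ebar := by linarith [hz]
  have hxball : x ∈ A ∩ Metric.ball xb (ε * db / ebar) :=
    ⟨hx.1, Metric.ball_subset_ball (by linarith [div_pos (mul_pos hε hdb) hebarpos]) hx.2⟩
  exact key ε hε x hxball zA ⟨hzAA, hzAball⟩ (z - zA) hv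

end Statements
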